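/- Let κ, α ∈ ℝ with κ ≠ 0, and let Ψ : ℝ² → ℝ be a C² function satisfying the quantum P_II equation κ Ψ_t = ½Ψ_xx − x∂_x(xΨ) − (t/2)Ψ_x − αxΨ. Define Φ(t,x) = exp(2x³/3 + xt) · Ψ(t, −x). Then Φ satisfies κ Φ_t = ½Φ_xx − x∂_x(xΦ) − (t/2)Φ_x − (−κ−α)xΦ. -/

import Mathlib

/-- The quantum second Painlevé operator: `(QPII κ α Ψ) t x` asserts nothing by itself; we
express the equation `κ Ψ_t = ½Ψ_xx − x ∂_x(xΨ) − (t/2)Ψ_x − αxΨ` with partial derivatives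
taken via `deriv` of the one-variable sections of `Ψ`. -/
def SatisfiesQPII (κ α : ℝ) (Ψ : ℝ → ℝ → ℝ) : Prop :=
  ∀ t x : ℝ,
    κ * deriv (fun s => Ψ s x) t
      = (1 / 2) * deriv (fun y => deriv (fun z => Ψ t z) y) x
        - x * deriv (fun y => y * Ψ t y) x
        - (t / 2) * deriv (fun y => Ψ t y) x
        - α * x * Ψ t x

/-- The Bäcklund transformation `π(Ψ)(t,x) = exp(2x³/3 + xt) Ψ(t,−x)` maps solutions of the
quantum second Painlevé equation QP_II(α) to solutions of QP_II(−κ−α). -/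
theorem stmt19 (κ α : ℝ) (hκ : κ ≠ 0) (Ψ : ℝ → ℝ → ℝ)
    (hΨ : ContDiff ℝ 2 (fun p : ℝ × ℝ => Ψ p.1 p.2))
    (hsol : SatisfiesQPII κ α Ψ) :
    SatisfiesQPII κ (-κ - α)
      (fun t x => Real.exp (2 * x ^ 3 / 3 + x * t) * Ψ t (-x)) := by
  have hsec : ∀ s : ℝ, ContDiff ℝ 2 (fun z => Ψ s z) := fun s =>
    hΨ.comp (contDiff_const.prodMk contDiff_id)
  have hsecT : ∀ z : ℝ, ContDiff ℝ 2 (fun u => Ψ u z) := fun z =>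
    hΨ.comp (contDiff_id.prodMk contDiff_const)
  have hd1 : ∀ s y : ℝ, DifferentiableAt ℝ (fun z => Ψ s z) y := fun s y =>
    ((hsec s).differentiable (by norm_num)) y
  have hdT : ∀ z s : ℝ, DifferentiableAt ℝ (fun u => Ψ u z) s := fun z s =>
    ((hsecT z).differentiable (by norm_num)) s
  have hd2 : ∀ s y : ℝ, DifferentiableAt ℝ (deriv (fun z => Ψ s z)) y := by
    intro s y
    have h : ContDiff ℝ ((1 : ℕ) + 1) (fun z => Ψ s z) := by exact_mod_cast hsec s
    rw [contDiff_succ_iff_deriv] at h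
    exact (h.2.2.differentiable (by norm_num)) y
  intro t x
  have hEder : ∀ y : ℝ, HasDerivAt (fun z : ℝ => Real.exp (2 * z ^ 3 / 3 + z * t))
      ((2 * y ^ 2 + t) * Real.exp (2 * y ^ 3 / 3 + y * t)) y := by
    intro y
    have h1 : HasDerivAt (fun z : ℝ => 2 * z ^ 3 / 3 + z * t) (2 * y ^ 2 + t) y := by
      have h := (((hasDerivAt_pow 3 y).const_mul (2:ℝ)).div_const 3).fun_add
        ((hasDerivAt_id y).mul_const t)
      exact h.congr_deriv (by push_cast; ring)
    simpa [mul_comm] using h1.exp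
  have hPneg : ∀ y : ℝ, HasDerivAt (fun z : ℝ => Ψ t (-z))
      (-(deriv (fun z => Ψ t z) (-y))) y := by
    intro y
    have := ((hd1 t (-y)).hasDerivAt).comp y (hasDerivAt_neg y)
    simpa [Function.comp_def] using this
  have hΦx : ∀ y : ℝ, HasDerivAt (fun z : ℝ => Real.exp (2 * z ^ 3 / 3 + z * t) * Ψ t (-z))
      (Real.exp (2 * y ^ 3 / 3 + y * t) *
        ((2 * y ^ 2 + t) * Ψ t (-y) - deriv (fun z => Ψ t z) (-y))) y := by
    intro y
    have := (hEder y).fun_mul (hPneg y)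
    exact this.congr_deriv (by ring)
  have hΦx' : (deriv fun z : ℝ => Real.exp (2 * z ^ 3 / 3 + z * t) * Ψ t (-z))
      = fun y : ℝ => Real.exp (2 * y ^ 3 / 3 + y * t) *
        ((2 * y ^ 2 + t) * Ψ t (-y) - deriv (fun z => Ψ t z) (-y)) :=
    funext fun y => (hΦx y).deriv
  have hP2neg : HasDerivAt (fun y : ℝ => deriv (fun z => Ψ t z) (-y))
      (-(deriv (deriv (fun z => Ψ t z)) (-x))) x := by
    have := ((hd2 t (-x)).hasDerivAt).comp x (hasDerivAt_neg x)
    simpa [Function.comp_def] using this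
  have hg : HasDerivAt (fun y : ℝ => (2 * y ^ 2 + t) * Ψ t (-y) - deriv (fun z => Ψ t z) (-y))
      ((4 * x) * Ψ t (-x) + (2 * x ^ 2 + t) * (-(deriv (fun z => Ψ t z) (-x)))
        - (-(deriv (deriv (fun z => Ψ t z)) (-x)))) x := by
    have ha : HasDerivAt (fun y : ℝ => 2 * y ^ 2 + t) (4 * x) x := by
      have := ((hasDerivAt_pow 2 x).const_mul (2:ℝ)).add_const t
      exact this.congr_deriv (by push_cast; ring)
    exact (ha.mul (hPneg x)).sub hP2neg
  have hΦxx : HasDerivAt (fun y : ℝ => Real.exp (2 * y ^ 3 / 3 + y * t) *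
        ((2 * y ^ 2 + t) * Ψ t (-y) - deriv (fun z => Ψ t z) (-y)))
      ((2 * x ^ 2 + t) * Real.exp (2 * x ^ 3 / 3 + x * t) *
        ((2 * x ^ 2 + t) * Ψ t (-x) - deriv (fun z => Ψ t z) (-x))
        + Real.exp (2 * x ^ 3 / 3 + x * t) *
          ((4 * x) * Ψ t (-x) - (2 * x ^ 2 + t) * deriv (fun z => Ψ t z) (-x)
            + deriv (deriv (fun z => Ψ t z)) (-x))) x := by
    have := (hEder x).fun_mul hg
    exact this.congr_deriv (by ring)
  have hΦt : HasDerivAt (fun s : ℝ => Real.exp (2 * x ^ 3 / 3 + x * s) * Ψ s (-x))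
      (x * Real.exp (2 * x ^ 3 / 3 + x * t) * Ψ t (-x)
        + Real.exp (2 * x ^ 3 / 3 + x * t) * deriv (fun s => Ψ s (-x)) t) t := by
    have hE : HasDerivAt (fun s : ℝ => Real.exp (2 * x ^ 3 / 3 + x * s))
        (x * Real.exp (2 * x ^ 3 / 3 + x * t)) t := by
      have h1 : HasDerivAt (fun s : ℝ => 2 * x ^ 3 / 3 + x * s) x t := by
        simpa using (hasDerivAt_const t (2 * x ^ 3 / 3)).fun_add ((hasDerivAt_id t).const_mul x)
      simpa [mul_comm] using h1.exp
    exact hE.mul (hdT (-x) t).hasDerivAt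
  have hxΦ : HasDerivAt (fun y : ℝ => y * (Real.exp (2 * y ^ 3 / 3 + y * t) * Ψ t (-y)))
      (Real.exp (2 * x ^ 3 / 3 + x * t) * Ψ t (-x)
        + x * (Real.exp (2 * x ^ 3 / 3 + x * t) *
          ((2 * x ^ 2 + t) * Ψ t (-x) - deriv (fun z => Ψ t z) (-x)))) x := by
    have := (hasDerivAt_id x).fun_mul (hΦx x)
    simpa using this
  have hxΨ : deriv (fun y : ℝ => y * Ψ t y) (-x)
      = Ψ t (-x) + (-x) * deriv (fun z => Ψ t z) (-x) := by
    have := (hasDerivAt_id (-x)).fun_mul (hd1 t (-x)).hasDerivAt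
    simpa using this.deriv
  have hsol' := hsol t (-x)
  rw [hxΨ] at hsol'
  beta_reduce
  rw [hΦt.deriv, hxΦ.deriv, (hΦx x).deriv]
  simp only [hΦx']
  rw [hΦxx.deriv]
  linear_combination Real.exp (2 * x ^ 3 / 3 + x * t) * hsol'
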